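/- arXiv:1812.07863 — 4 statements merged into one kernel-verified Lean document; each statement's English description precedes it below -/
import Mathlib

section
/- Let N be a squarefree positive integer with N > 1, and let d = N·d₁ with gcd(d₁, N) = 1. Then the map v₁ ↦ N·(inverse of v₁ mod d₁ lifted appropriately) gives a bijection between the solutions of v₁² + N ≡ 0 (mod d₁) and the solutions of v² + N ≡ 0 (mod d). -/
/-!
Under the Chinese remainder theorem `ZMod (N * d₁) ≅ ZMod N × ZMod d₁`, a solution of
`v² + N = 0` has `N`-component `v² = 0`, hence `0` because `ZMod N` is reduced for squarefree `N`.
The solutions modulo `N * d₁` are therefore the lifts of `(0, w)` with `w² + N = 0` modulo `d₁`.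
Since `v₁² = -N`, the residue `N · v₁⁻¹` modulo `d₁` is `-v₁`, so the bijection is
`v₁ ↦ (0, -v₁)`.
-/

namespace ZMod

variable {m n : ℕ}

theorem chineseRemainder_apply (h : m.Coprime n) (v : ZMod (m * n)) :
    chineseRemainder h v =
      (castHom (dvd_mul_right m n) (ZMod m) v, castHom (dvd_mul_left n m) (ZMod n) v) := by
  ext <;> simp [chineseRemainder, castHom_apply, Prod.fst_zmod_cast, Prod.snd_zmod_cast]

theorem castHom_chineseRemainder_symm (h : m.Coprime n) (p : ZMod m × ZMod n) :
    castHom (dvd_mul_left n m) (ZMod n) ((chineseRemainder h).symm p) = p.2 := by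
  conv_rhs => rw [← (chineseRemainder h).apply_symm_apply p, chineseRemainder_apply]

theorem castHom_eq_zero_of_sq_add_eq_zero (hm : Squarefree m) {v : ZMod (m * n)}
    (hv : v ^ 2 + m = 0) : castHom (dvd_mul_right m n) (ZMod m) v = 0 := by
  have : IsReduced (ZMod m) := isReduced_zmod.mpr (Or.inl hm)
  refine IsNilpotent.eq_zero ⟨2, ?_⟩
  simpa using congrArg (castHom (dvd_mul_right m n) (ZMod m)) hv

theorem sq_add_eq_zero_of_chineseRemainder_symm (h : m.Coprime n) {x : ZMod n}
    (hx : x ^ 2 + m = 0) : ((chineseRemainder h).symm (0, x)) ^ 2 + m = 0 := by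
  apply (chineseRemainder h).injective
  rw [map_add, map_pow, RingEquiv.apply_symm_apply, map_natCast, map_zero]
  ext <;> simp [hx]

def sqAddEqZeroEquiv (hm : Squarefree m) (h : m.Coprime n) :
    {x : ZMod n // x ^ 2 + m = 0} ≃ {v : ZMod (m * n) // v ^ 2 + m = 0} where
  toFun x := ⟨(chineseRemainder h).symm (0, -x),
    sq_add_eq_zero_of_chineseRemainder_symm h (by rw [neg_sq]; exact x.2)⟩
  invFun v := ⟨-castHom (dvd_mul_left n m) (ZMod n) v, by
    rw [neg_sq]
    simpa using congrArg (castHom (dvd_mul_left n m) (ZMod n)) v.2⟩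
  left_inv x := by
    ext
    simp only [castHom_chineseRemainder_symm, neg_neg]
  right_inv v := by
    ext
    dsimp only
    rw [neg_neg, RingEquiv.symm_apply_eq, chineseRemainder_apply,
      castHom_eq_zero_of_sq_add_eq_zero hm v.2]

theorem castHom_sqAddEqZeroEquiv (hm : Squarefree m) (h : m.Coprime n)
    (x : {x : ZMod n // x ^ 2 + m = 0}) :
    castHom (dvd_mul_left n m) (ZMod n) (sqAddEqZeroEquiv hm h x : ZMod (m * n)) = -x :=
  castHom_chineseRemainder_symm h _

end ZMod

theorem stmt_1_general (N d₁ : ℕ) (hN : Squarefree N)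
    (hcop : Nat.Coprime d₁ N) :
    ∃ e : {v₁ : ZMod d₁ // v₁ ^ 2 + (N : ZMod d₁) = 0} ≃
          {v : ZMod (N * d₁) // v ^ 2 + (N : ZMod (N * d₁)) = 0},
      ∀ x, (ZMod.castHom (dvd_mul_left d₁ N) (ZMod d₁) (e x : ZMod (N * d₁))) * (x : ZMod d₁)
        = (N : ZMod d₁) := by
  refine ⟨ZMod.sqAddEqZeroEquiv hN hcop.symm, fun x => ?_⟩
  rw [ZMod.castHom_sqAddEqZeroEquiv]
  linear_combination -x.2

/-- Let `N` be a squarefree positive integer with `N > 1`, and `d = N * d₁` with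
`gcd(d₁, N) = 1`. Then there is a bijection between the solutions of
`v₁² + N ≡ 0 (mod d₁)` and the solutions of `v² + N ≡ 0 (mod N * d₁)`, given by
`v₁ ↦ N · v₁⁻¹`, i.e. the image `v` satisfies `v · v₁ ≡ N (mod d₁)`. -/
theorem stmt_1 (N d₁ : ℕ) (hN : Squarefree N) (hN1 : 1 < N) (hd₁ : 0 < d₁)
    (hcop : Nat.Coprime d₁ N) :
    ∃ e : {v₁ : ZMod d₁ // v₁ ^ 2 + (N : ZMod d₁) = 0} ≃
          {v : ZMod (N * d₁) // v ^ 2 + (N : ZMod (N * d₁)) = 0},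
      ∀ x, (ZMod.castHom (dvd_mul_left d₁ N) (ZMod d₁) (e x : ZMod (N * d₁))) * (x : ZMod d₁)
        = (N : ZMod d₁) :=
  stmt_1_general N d₁ hN hcop
end

section
/- Let N ∈ {1, 2, 67, 163} and let d be a positive integer. For each solution v of v² + N ≡ 0 (mod d), there exist coprime integers a_v, q_v with q_v > 0, c₁·d^{1/2} ≤ q_v ≤ c₂·d^{1/2} for constants c₁, c₂ > 0 depending only on N, such that |v/d − a_v/q_v| ≤ 1/q_v². -/
/-!
Apply Dirichlet's approximation theorem to `v / d` with `n = ⌊√(2d)⌋`: this gives a reduced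
fraction `a / q` with `q ≤ n ≤ √2 √d`, `|v/d - a/q| ≤ 1/((n+1) q) ≤ 1/q²`, and
`r = q v - a d` satisfies `r² ≤ d / 2`. Since `r² + N q² ≡ q² (v² + N) ≡ 0 (mod d)` and
`r² + N q² > 0`, we get `d ≤ r² + N q² ≤ d/2 + N q²`, hence `q ≥ √d / √(2N)`.
-/

open Real

theorem Real.exists_coprime_abs_sub_div_le (ξ : ℝ) {n : ℕ} (hn : 0 < n) :
    ∃ a q : ℤ, IsCoprime a q ∧ 0 < q ∧ q ≤ n ∧ |ξ - a / q| ≤ 1 / ((n + 1) * q) := by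
  obtain ⟨p, hp, hden⟩ := exists_rat_abs_sub_le_and_den_le ξ hn
  refine ⟨p.num, p.den, Int.isCoprime_iff_nat_coprime.mpr p.reduced, by exact_mod_cast p.pos,
    by exact_mod_cast hden, ?_⟩
  rwa [Rat.cast_def] at hp

theorem dvd_sq_add_mul_sq_of_dvd {R : Type*} [CommRing R] {d v N : R} (a q : R)
    (h : d ∣ v ^ 2 + N) : d ∣ (q * v - a * d) ^ 2 + N * q ^ 2 := by
  obtain ⟨e, he⟩ := h
  exact ⟨q ^ 2 * e - 2 * q * v * a + a ^ 2 * d, by linear_combination q ^ 2 * he⟩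

theorem sq_mul_sub_mul_le_half {d m v a q : ℝ} (hd : 0 < d) (hm : 0 < m) (hq : 0 < q)
    (hdm : 2 * d ≤ m ^ 2) (h : |v / d - a / q| ≤ 1 / (m * q)) : (q * v - a * d) ^ 2 ≤ d / 2 := by
  have habs : |q * v - a * d| ≤ d / m :=
    calc |q * v - a * d| = d * q * |v / d - a / q| := by
          rw [← abs_of_pos (by positivity : 0 < d * q), ← abs_mul]; congr 1; field_simp
      _ ≤ d * q * (1 / (m * q)) := by gcongr
      _ = d / m := by field_simp
  calc (q * v - a * d) ^ 2 = |q * v - a * d| ^ 2 := (sq_abs _).symm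
    _ ≤ (d / m) ^ 2 := pow_le_pow_left₀ (abs_nonneg _) habs 2
    _ ≤ d ^ 2 / (2 * d) := by
      rw [div_pow]; exact div_le_div_of_nonneg_left (by positivity) (by positivity) hdm
    _ = d / 2 := by field_simp

/-- For `N ∈ {1, 2, 67, 163}` there are constants `c₁, c₂ > 0` depending only on `N`
such that for every positive integer `d` and every solution `v` of
`v² + N ≡ 0 (mod d)` there is a fraction `a/q` with `gcd(a, q) = 1`,
`c₁ √d ≤ q ≤ c₂ √d` and `|v/d - a/q| ≤ 1/q²`. -/
theorem stmt_6 (N : ℕ) (hN : N ∈ ({1, 2, 67, 163} : Set ℕ)) :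
    ∃ c₁ c₂ : ℝ, 0 < c₁ ∧ 0 < c₂ ∧
      ∀ d : ℕ, 0 < d → ∀ v : ℤ, 0 ≤ v → v < d → (d : ℤ) ∣ v ^ 2 + N →
        ∃ a q : ℤ, IsCoprime a q ∧ 0 < q ∧
          c₁ * Real.sqrt d ≤ q ∧ (q : ℝ) ≤ c₂ * Real.sqrt d ∧
          |(v : ℝ) / d - (a : ℝ) / q| ≤ 1 / (q : ℝ) ^ 2 := by
  have hN1 : 1 ≤ N := by rcases hN with rfl | rfl | rfl | rfl <;> norm_num
  refine ⟨(√(2 * N))⁻¹, √2, by positivity, by positivity, fun d hd v _ _ hdvd => ?_⟩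
  have hdR : (1 : ℝ) ≤ d := by exact_mod_cast hd
  set n := ⌊√(2 * d)⌋₊
  have hn : 0 < n := Nat.floor_pos.mpr (one_le_sqrt.mpr (by linarith))
  have hn_le : (n : ℝ) ≤ √2 * √d := by
    rw [← sqrt_mul zero_le_two]; exact Nat.floor_le (sqrt_nonneg _)
  have hd_le_succ_sq : 2 * (d : ℝ) ≤ (n + 1) ^ 2 := by
    rw [← sq_sqrt (by positivity : (0 : ℝ) ≤ 2 * d)]
    exact pow_le_pow_left₀ (sqrt_nonneg _) (Nat.lt_floor_add_one _).le 2
  obtain ⟨a, q, hcop, hq, hqn, happrox⟩ := exists_coprime_abs_sub_div_le ((v : ℝ) / d) hn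
  have hqR : (0 : ℝ) < q := by exact_mod_cast hq
  have hr_sq : ((q * v - a * d : ℤ) : ℝ) ^ 2 ≤ d / 2 := by
    push_cast; exact sq_mul_sub_mul_le_half (by positivity) (by positivity) hqR hd_le_succ_sq happrox
  have hd_le : (d : ℤ) ≤ (q * v - a * d) ^ 2 + N * q ^ 2 :=
    Int.le_of_dvd (by positivity) (dvd_sq_add_mul_sq_of_dvd a q hdvd)
  have hd_le_two_mul : (d : ℝ) ≤ 2 * N * q ^ 2 := by
    have : (d : ℝ) ≤ ((q * v - a * d : ℤ) : ℝ) ^ 2 + N * q ^ 2 := by exact_mod_cast hd_le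
    linarith
  refine ⟨a, q, hcop, hq, ?_, ?_, ?_⟩
  · rw [inv_mul_le_iff₀ (by positivity), ← sqrt_sq hqR.le, ← sqrt_mul (by positivity)]
    exact sqrt_le_sqrt hd_le_two_mul
  · exact (Int.cast_le.mpr hqn).trans hn_le
  · refine happrox.trans (one_div_le_one_div_of_le (by positivity) ?_)
    rw [sq]
    have : (q : ℝ) ≤ n + 1 := by exact_mod_cast hqn.trans (by omega)
    exact mul_le_mul_of_nonneg_right this hqR.le
end

section
/- Let N be a positive integer, p an odd prime with p ∤ 2N, and α ≥ 1. Let ρ_{0,N}(p) be the number of x mod p with x² + N ≡ 0 (mod p), and ρ_N(p^α) the number of pairs (u,v) mod p^α with u² + Nv² ≡ 0 (mod p^α). Then ρ_N(p^α) = (α/2)·φ(p^α)·ρ_{0,N}(p) + p^α if α is even, and ρ_N(p^α) = ((α+1)/2)·φ(p^α)·ρ_{0,N}(p) + p^{α−1} if α is odd. -/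
/-- `ρ_N(d)`: number of pairs `(u, v)` with `0 < u, v ≤ d`, `d ∣ u² + N v²`. -/
def rhoN (N d : ℕ) : ℕ :=
  ((Finset.Icc 1 d ×ˢ Finset.Icc 1 d).filter (fun p => d ∣ p.1 ^ 2 + N * p.2 ^ 2)).card

/-- `ρ_{0,N}(d)`: number of residues `x (mod d)` with `d ∣ x² + N`. -/
def rhoZeroN (N d : ℕ) : ℕ :=
  ((Finset.range d).filter (fun x => d ∣ x ^ 2 + N)).card

/-!
Split the zeros `(u, v)` of `u² + N v²` modulo `p^α` according to whether `v` is a unit.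
When it is, `u / v` is a square root of `-N`; by Hensel's lemma (`2x` is a unit since
`p ∤ 2N`) there are exactly `ρ_{0,N}(p)` of those modulo every `p^α`, giving
`φ(p^α) ρ_{0,N}(p)` zeros. When it is not, `p` divides both `u` and `v`: there is only
`(0, 0)` for `α = 1`, and for `α ≥ 2` dividing by `p` yields the zeros modulo `p^(α-2)`,
each `p²` times.
Hence `ρ_N(p^(α+2)) = φ(p^(α+2)) ρ_{0,N}(p) + p² ρ_N(p^α)`, which is solved in closed form
using `φ(p^(α+2)) = p² φ(p^α)`.
-/

open Finset

section Ring

variable {R : Type*} [CommRing R] [Fintype R] [DecidableEq R]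

def quadZeros (c : R) : Finset (R × R) := {z | z.1 ^ 2 + c * z.2 ^ 2 = 0}

def sqrtsOfNeg (c : R) : Finset R := {x | x ^ 2 + c = 0}

lemma card_quadZeros_filter_isUnit (c : R) :
    #{z ∈ quadZeros c | IsUnit z.2} = #(sqrtsOfNeg c) * Fintype.card Rˣ := by
  rw [← card_univ (α := Rˣ), ← card_product]
  symm
  refine card_bij (fun w _ => (w.1 * w.2, (w.2 : R))) ?_ ?_ ?_
  · rintro ⟨x, w⟩ hw
    simp only [sqrtsOfNeg, quadZeros, mem_product, mem_filter, mem_univ, true_and,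
      and_true] at hw ⊢
    refine ⟨?_, w.isUnit⟩
    linear_combination (w : R) ^ 2 * hw
  · rintro ⟨x, w⟩ - ⟨x', w'⟩ - h
    simp only [Prod.mk.injEq, Units.val_inj] at h
    obtain ⟨hx, rfl⟩ := h
    simpa using hx
  · rintro ⟨u, v⟩ huv
    simp only [quadZeros, mem_filter, mem_univ, true_and] at huv
    obtain ⟨huv, hv⟩ := huv
    have hinv : v * ↑hv.unit⁻¹ = 1 := hv.mul_val_inv
    refine ⟨(u * ↑hv.unit⁻¹, hv.unit), ?_,
      Prod.ext (by simp only [IsUnit.unit_spec]; linear_combination u * hinv) hv.unit_spec⟩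
    simp only [sqrtsOfNeg, mem_product, mem_filter, mem_univ, true_and, and_true]
    linear_combination (↑hv.unit⁻¹ : R) ^ 2 * huv - c * (v * ↑hv.unit⁻¹ + 1) * hinv

lemma mem_sqrtsOfNeg_map {S : Type*} [CommRing S] [Fintype S] [DecidableEq S] (f : R →+* S)
    {N : ℕ} {x : R} (hx : x ∈ sqrtsOfNeg (N : R)) : f x ∈ sqrtsOfNeg (N : S) := by
  simp only [sqrtsOfNeg, mem_filter, mem_univ, true_and] at hx ⊢
  simpa using congrArg f hx

end Ring

lemma card_quadZeros_filter_not_isUnit {F : Type*} [Field F] [Fintype F] [DecidableEq F]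
    (c : F) : #{z ∈ quadZeros c | ¬IsUnit z.2} = 1 := by
  rw [card_eq_one]
  refine ⟨(0, 0), ?_⟩
  ext ⟨u, v⟩
  simp only [quadZeros, mem_filter, mem_univ, true_and, isUnit_iff_ne_zero, not_not,
    mem_singleton, Prod.mk.injEq]
  constructor
  · rintro ⟨h, rfl⟩
    simpa using h
  · rintro ⟨rfl, rfl⟩
    simp

lemma Finset.card_filter_comp_of_bijOn {α β : Type*} [Fintype β] [DecidableEq β]
    {s : Finset α} {f : α → β} (hf : Set.BijOn f s Set.univ) (P : β → Prop)
    [DecidablePred P] : #{a ∈ s | P (f a)} = #{b | P b} := by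
  have himage : s.image f = univ := by
    simpa [← coe_inj] using hf.image_eq
  rw [← card_image_of_injOn (hf.injOn.mono (coe_subset.2 (filter_subset _ _))), ← filter_image,
    himage]

section Fibers

variable {G H : Type*} [AddGroup G] [Fintype G] [AddGroup H] [Fintype H] [DecidableEq H]

lemma AddMonoidHom.card_filter_comp_of_surjective (f : G →+ H) (hf : Function.Surjective f)
    (P : H → Prop) [DecidablePred P] :
    #{x | P (f x)} = #{y | P y} * #{x | f x = 0} := by
  rw [card_eq_sum_card_fiberwise (f := f) (t := {y | P y}) (fun x hx => by simpa using hx),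
    ← smul_eq_mul, ← sum_const]
  refine sum_congr rfl fun y hy => ?_
  have hfiber : {x ∈ ({x | P (f x)} : Finset G) | f x = y} = ({x | f x = y} : Finset G) := by
    ext x
    simp only [mem_filter, mem_univ, true_and]
    exact ⟨And.right, fun h => ⟨h ▸ (mem_filter.1 hy).2, h⟩⟩
  rw [hfiber]
  exact card_fiber_eq_of_mem_range f (hf y) ⟨0, map_zero f⟩

lemma AddMonoidHom.card_eq_card_mul_card_ker (f : G →+ H) (hf : Function.Surjective f) :
    Fintype.card G = Fintype.card H * #{x | f x = 0} := by
  simpa using f.card_filter_comp_of_surjective hf (fun _ => True)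

end Fibers

namespace ZMod

section NatCast

variable {q : ℕ} [NeZero q]

lemma bijOn_natCast_range : Set.BijOn (Nat.cast : ℕ → ZMod q) (range q) Set.univ := by
  refine ⟨Set.mapsTo_univ _ _, fun a ha b hb h => ?_,
    fun z _ => ⟨z.val, by simp [z.val_lt], by simp⟩⟩
  exact ((natCast_eq_natCast_iff _ _ _).1 h).eq_of_lt_of_lt (mem_range.1 ha) (mem_range.1 hb)

lemma bijOn_natCast_Icc : Set.BijOn (Nat.cast : ℕ → ZMod q) (Icc 1 q) Set.univ := by
  refine ⟨Set.mapsTo_univ _ _, fun a ha b hb h => ?_, fun z _ => ?_⟩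
  · simp only [coe_Icc, Set.mem_Icc] at ha hb
    refine ((natCast_eq_natCast_iff _ _ _).1 h).eq_of_abs_lt ?_
    rw [abs_sub_lt_iff]
    omega
  · by_cases hz : z = 0
    · exact ⟨q, by simp [NeZero.one_le], by simp [hz]⟩
    · exact ⟨z.val, by simp [z.val_lt.le, Nat.one_le_iff_ne_zero, hz], by simp⟩

end NatCast

section PrimePow

variable {p k : ℕ} [Fact p.Prime]

lemma isUnit_prime_pow_iff (hk : k ≠ 0) (x : ZMod (p ^ k)) : IsUnit x ↔ ¬p ∣ x.val := by
  rw [← natCast_zmod_val x, isUnit_iff_coprime, val_natCast_of_lt x.val_lt,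
    Nat.coprime_pow_right_iff (Nat.pos_of_ne_zero hk), Nat.coprime_comm,
    Nat.Prime.coprime_iff_not_dvd Fact.out]

lemma isUnit_castHom_prime_iff (hk : k ≠ 0) (x : ZMod (p ^ k)) :
    IsUnit (castHom (dvd_pow_self p hk) (ZMod p) x) ↔ IsUnit x := by
  rw [isUnit_prime_pow_iff hk, isUnit_iff_ne_zero, castHom_apply, cast_eq_val, Ne,
    natCast_eq_zero_iff]

lemma isUnit_castHom_prime_pow_iff {j : ℕ} (hk : k ≠ 0) (hkj : k ≤ j) (x : ZMod (p ^ j)) :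
    IsUnit (castHom (pow_dvd_pow p hkj) (ZMod (p ^ k)) x) ↔ IsUnit x := by
  rw [isUnit_prime_pow_iff hk, isUnit_prime_pow_iff (by omega), castHom_apply, cast_eq_val,
    val_natCast, Nat.dvd_mod_iff (dvd_pow_self p hk)]

end PrimePow

lemma card_filter_castHom_mem_mul_sq {m n : ℕ} [NeZero m] [NeZero n] (h : m ∣ n)
    (s : Finset (ZMod m × ZMod m)) :
    #{w : ZMod n × ZMod n | (castHom h (ZMod m) w.1, castHom h (ZMod m) w.2) ∈ s} * m ^ 2 =
      #s * n ^ 2 := by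
  let π := (castHom h (ZMod m) : ZMod n →+ ZMod m).prodMap
    (castHom h (ZMod m) : ZMod n →+ ZMod m)
  have hsurj : Function.Surjective π :=
    (ringHom_surjective (castHom h (ZMod m))).prodMap (ringHom_surjective (castHom h (ZMod m)))
  have hker := π.card_eq_card_mul_card_ker hsurj
  have hcount := π.card_filter_comp_of_surjective hsurj (· ∈ s)
  rw [filter_mem_eq_inter, univ_inter] at hcount
  rw [Fintype.card_prod, Fintype.card_prod, ZMod.card, ZMod.card] at hker
  change #{x | π x ∈ s} * m ^ 2 = _
  rw [hcount, sq, sq, hker]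
  ring

lemma exists_eq_mul_of_castHom_eq_zero {m n : ℕ} [NeZero n] (h : m ∣ n) {x : ZMod n}
    (hx : castHom h (ZMod m) x = 0) : ∃ c, x = m * c := by
  rw [castHom_apply, cast_eq_val, natCast_eq_zero_iff] at hx
  obtain ⟨c, hc⟩ := hx
  exact ⟨c, by rw [← natCast_zmod_val x, hc, Nat.cast_mul]⟩

section Scale

variable {n m d : ℕ} [NeZero n] [NeZero d]

def scale (d : ℕ) (a : ZMod n) : ZMod m := ((d * a.val : ℕ) : ZMod m)

lemma val_scale (hm : m = n * d) (a : ZMod n) : (scale d a : ZMod m).val = d * a.val := by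
  rw [scale, val_natCast_of_lt]
  rw [hm, mul_comm n]
  exact Nat.mul_lt_mul_of_pos_left a.val_lt (Nat.pos_of_neZero d)

lemma scale_injective (hm : m = n * d) : Function.Injective (scale d : ZMod n → ZMod m) :=
  fun a b h => val_injective n <| Nat.eq_of_mul_eq_mul_left (Nat.pos_of_neZero d) <| by
    rw [← val_scale hm, ← val_scale hm, h]

lemma exists_scale_eq_iff (hm : m = n * d) (x : ZMod m) :
    (∃ a : ZMod n, scale d a = x) ↔ d ∣ x.val := by
  have : NeZero m := ⟨by rw [hm]; exact mul_ne_zero (NeZero.ne n) (NeZero.ne d)⟩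
  constructor
  · rintro ⟨a, rfl⟩
    exact ⟨a.val, val_scale hm a⟩
  · rintro ⟨c, hc⟩
    have hcn : c < n := by
      have := x.val_lt
      rw [hc, hm, mul_comm n] at this
      exact Nat.lt_of_mul_lt_mul_left this
    refine ⟨c, val_injective _ ?_⟩
    rw [val_scale hm, val_natCast_of_lt hcn, hc]

lemma scale_sq_add_mul_scale_sq_eq_zero_iff {k : ℕ} [NeZero k] (hn : n = k * d)
    (hm : m = n * d) (c : ℕ) (a b : ZMod n) :
    (scale d a : ZMod m) ^ 2 + (c : ZMod m) * scale d b ^ 2 = 0 ↔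
      castHom (Dvd.intro d hn.symm) (ZMod k) a ^ 2 +
        (c : ZMod k) * castHom (Dvd.intro d hn.symm) (ZMod k) b ^ 2 = 0 := by
  have key {l : ℕ} (x y : ℕ) :
      (x : ZMod l) ^ 2 + c * (y : ZMod l) ^ 2 = 0 ↔ l ∣ x ^ 2 + c * y ^ 2 := by
    rw [← natCast_eq_zero_iff]
    push_cast
    rfl
  simp only [scale, castHom_apply, cast_eq_val, key]
  rw [show (d * a.val) ^ 2 + c * (d * b.val) ^ 2 = (a.val ^ 2 + c * b.val ^ 2) * (d * d) by ring,
    hm, show n * d = k * (d * d) by rw [hn, mul_assoc]]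
  exact Nat.mul_dvd_mul_iff_right (Nat.pos_of_neZero _)

end Scale

end ZMod

lemma rhoN_eq_card_quadZeros (N q : ℕ) [NeZero q] : rhoN N q = #(quadZeros (N : ZMod q)) := by
  have hbij := (ZMod.bijOn_natCast_Icc (q := q)).prodMap (ZMod.bijOn_natCast_Icc (q := q))
  rw [← coe_product, Set.univ_prod_univ] at hbij
  rw [rhoN, quadZeros, ← card_filter_comp_of_bijOn hbij]
  simp [← ZMod.natCast_eq_zero_iff]

lemma rhoZeroN_eq_card_sqrtsOfNeg (N q : ℕ) [NeZero q] :
    rhoZeroN N q = #(sqrtsOfNeg (N : ZMod q)) := by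
  rw [rhoZeroN, sqrtsOfNeg, ← card_filter_comp_of_bijOn ZMod.bijOn_natCast_range]
  simp [← ZMod.natCast_eq_zero_iff]

section PrimePowers

open ZMod

variable {p N : ℕ} [Fact p.Prime]

lemma isUnit_two_mul_of_mem_sqrtsOfNeg (hp2N : ¬p ∣ 2 * N) {k : ℕ} (hk : k ≠ 0)
    {x : ZMod (p ^ k)} (hx : x ∈ sqrtsOfNeg (N : ZMod (p ^ k))) : IsUnit (2 * x) := by
  have hy := mem_sqrtsOfNeg_map (castHom (dvd_pow_self p hk) (ZMod p)) hx
  rw [← isUnit_castHom_prime_iff hk, isUnit_iff_ne_zero, map_mul, map_ofNat]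
  simp only [sqrtsOfNeg, mem_filter, mem_univ, true_and] at hy
  rintro h
  rcases mul_eq_zero.1 h with h2 | hy0
  · exact hp2N (dvd_mul_of_dvd_left ((natCast_eq_zero_iff 2 p).1 (by exact_mod_cast h2)) N)
  · rw [hy0, zero_pow two_ne_zero, zero_add, natCast_eq_zero_iff] at hy
    exact hp2N (dvd_mul_of_dvd_right hy 2)

lemma isUnit_two_mul_of_castHom_mem_sqrtsOfNeg (hp2N : ¬p ∣ 2 * N) {α : ℕ} (hα : α ≠ 0)
    {x : ZMod (p ^ (α + 1))}
    (hx : castHom (pow_dvd_pow p α.le_succ) (ZMod (p ^ α)) x ∈ sqrtsOfNeg (N : ZMod (p ^ α))) :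
    IsUnit (2 * x) := by
  rw [← isUnit_castHom_prime_pow_iff hα α.le_succ, map_mul, map_ofNat]
  exact isUnit_two_mul_of_mem_sqrtsOfNeg hp2N hα hx

lemma castHom_injOn_sqrtsOfNeg (hp2N : ¬p ∣ 2 * N) {α : ℕ} (hα : α ≠ 0) :
    Set.InjOn (castHom (pow_dvd_pow p α.le_succ) (ZMod (p ^ α)))
      (sqrtsOfNeg (N : ZMod (p ^ (α + 1)))) := by
  set π := castHom (pow_dvd_pow p α.le_succ) (ZMod (p ^ α))
  intro x hx y hy hxy
  have h2x := isUnit_two_mul_of_castHom_mem_sqrtsOfNeg hp2N hα (mem_sqrtsOfNeg_map π hx)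
  -- `x + y` and `2 * x` have the same image modulo `p ^ α`, so both are units
  have hsum : IsUnit (x + y) := by
    rw [← isUnit_castHom_prime_pow_iff hα α.le_succ, map_add, ← hxy, ← two_mul]
    rwa [← isUnit_castHom_prime_pow_iff hα α.le_succ, map_mul, map_ofNat] at h2x
  have hx' : x ^ 2 + N = 0 := by simpa [sqrtsOfNeg] using hx
  have hy' : y ^ 2 + N = 0 := by simpa [sqrtsOfNeg] using hy
  rw [← sub_eq_zero, ← hsum.mul_right_eq_zero]
  linear_combination hx' - hy'

lemma exists_castHom_eq_of_mem_sqrtsOfNeg (hp2N : ¬p ∣ 2 * N) {α : ℕ} (hα : α ≠ 0)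
    {y : ZMod (p ^ α)} (hy : y ∈ sqrtsOfNeg (N : ZMod (p ^ α))) :
    ∃ x ∈ sqrtsOfNeg (N : ZMod (p ^ (α + 1))),
      castHom (pow_dvd_pow p α.le_succ) (ZMod (p ^ α)) x = y := by
  set π := castHom (pow_dvd_pow p α.le_succ) (ZMod (p ^ α))
  obtain ⟨x, rfl⟩ := ringHom_surjective π y
  have hx := isUnit_two_mul_of_castHom_mem_sqrtsOfNeg hp2N hα hy
  simp only [sqrtsOfNeg, mem_filter, mem_univ, true_and] at hy
  obtain ⟨c, hc⟩ := exists_eq_mul_of_castHom_eq_zero (pow_dvd_pow p α.le_succ)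
    (show π (x ^ 2 + N) = 0 by simpa using hy)
  have hsq : ((p ^ α : ℕ) : ZMod (p ^ (α + 1))) ^ 2 = 0 := by
    rw [← Nat.cast_pow, ← pow_mul, natCast_eq_zero_iff]
    exact pow_dvd_pow p (by omega)
  -- one Newton step `x - f(x) / f'(x)`, exact because `(p ^ α)² = 0` modulo `p ^ (α + 1)`
  refine ⟨x - c * ↑hx.unit⁻¹ * (p ^ α : ℕ), ?_,
    by rw [map_sub, map_mul, map_natCast, natCast_self, mul_zero, sub_zero]⟩
  simp only [sqrtsOfNeg, mem_filter, mem_univ, true_and]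
  linear_combination hc - (p ^ α : ℕ) * c * hx.mul_val_inv + c ^ 2 * ↑hx.unit⁻¹ ^ 2 * hsq

lemma card_sqrtsOfNeg_pow_succ (hp2N : ¬p ∣ 2 * N) {α : ℕ} (hα : α ≠ 0) :
    #(sqrtsOfNeg (N : ZMod (p ^ (α + 1)))) = #(sqrtsOfNeg (N : ZMod (p ^ α))) :=
  card_nbij _ (fun _ hx => mem_sqrtsOfNeg_map _ hx) (castHom_injOn_sqrtsOfNeg hp2N hα)
    fun _ hy => exists_castHom_eq_of_mem_sqrtsOfNeg hp2N hα hy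

lemma card_sqrtsOfNeg_prime_pow (hp2N : ¬p ∣ 2 * N) {α : ℕ} (hα : α ≠ 0) :
    #(sqrtsOfNeg (N : ZMod (p ^ α))) = rhoZeroN N p := by
  induction α with
  | zero => exact absurd rfl hα
  | succ α ih =>
    rcases eq_or_ne α 0 with rfl | hα'
    · rw [← rhoZeroN_eq_card_sqrtsOfNeg, zero_add, pow_one]
    · rw [card_sqrtsOfNeg_pow_succ hp2N hα', ih hα']

lemma not_isUnit_fst_of_mem_quadZeros {k : ℕ} (hk : k ≠ 0) {z : ZMod (p ^ k) × ZMod (p ^ k)}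
    (hz : z ∈ quadZeros (N : ZMod (p ^ k))) (hv : ¬IsUnit z.2) : ¬IsUnit z.1 := by
  simp only [quadZeros, mem_filter, mem_univ, true_and] at hz
  rw [← isUnit_castHom_prime_iff hk, isUnit_iff_ne_zero, not_not] at hv ⊢
  have := congrArg (castHom (dvd_pow_self p hk) (ZMod p)) hz
  rw [map_add, map_mul, map_pow, map_pow, map_natCast, hv, map_zero] at this
  simpa using this

lemma card_quadZeros_filter_not_isUnit_pow_add_two_eq (β : ℕ) :
    #{z ∈ quadZeros (N : ZMod (p ^ (β + 2))) | ¬IsUnit z.2} =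
      #{w : ZMod (p ^ (β + 1)) × ZMod (p ^ (β + 1)) |
        (castHom (pow_dvd_pow p β.le_succ) (ZMod (p ^ β)) w.1,
          castHom (pow_dvd_pow p β.le_succ) (ZMod (p ^ β)) w.2) ∈
          quadZeros (N : ZMod (p ^ β))} := by
  have hm : p ^ (β + 2) = p ^ (β + 1) * p := pow_succ p (β + 1)
  set π := castHom (pow_dvd_pow p β.le_succ) (ZMod (p ^ β))
  set σ : ZMod (p ^ (β + 1)) → ZMod (p ^ (β + 2)) := scale p
  have hσ (w : ZMod (p ^ (β + 1)) × ZMod (p ^ (β + 1))) :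
      (σ w.1, σ w.2) ∈ quadZeros (N : ZMod (p ^ (β + 2))) ↔
        (π w.1, π w.2) ∈ quadZeros (N : ZMod (p ^ β)) := by
    simp only [quadZeros, mem_filter, mem_univ, true_and]
    exact scale_sq_add_mul_scale_sq_eq_zero_iff (pow_succ p β) hm N w.1 w.2
  have hσ_range (x : ZMod (p ^ (β + 2))) : (∃ a, σ a = x) ↔ ¬IsUnit x := by
    rw [isUnit_prime_pow_iff (Nat.succ_ne_zero _), not_not]
    exact exists_scale_eq_iff hm x
  symm
  refine card_nbij (fun w => (σ w.1, σ w.2)) ?_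
    ((scale_injective hm).prodMap (scale_injective hm)).injOn ?_
  · intro w hw
    simp only [coe_filter, mem_univ, true_and] at hw ⊢
    exact ⟨(hσ w).2 hw, (hσ_range _).1 ⟨w.2, rfl⟩⟩
  · rintro ⟨u, v⟩ huv
    simp only [coe_filter] at huv
    obtain ⟨a, rfl⟩ := (hσ_range u).2
      (not_isUnit_fst_of_mem_quadZeros (Nat.succ_ne_zero _) huv.1 huv.2)
    obtain ⟨b, rfl⟩ := (hσ_range v).2 huv.2
    exact ⟨(a, b), mem_coe.2 (mem_filter.2 ⟨mem_univ _, (hσ (a, b)).1 huv.1⟩), rfl⟩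

lemma card_quadZeros_filter_not_isUnit_pow_add_two (β : ℕ) :
    #{z ∈ quadZeros (N : ZMod (p ^ (β + 2))) | ¬IsUnit z.2} =
      p ^ 2 * #(quadZeros (N : ZMod (p ^ β))) := by
  have hcount := card_filter_castHom_mem_mul_sq (pow_dvd_pow p β.le_succ)
    (quadZeros (N : ZMod (p ^ β)))
  rw [← card_quadZeros_filter_not_isUnit_pow_add_two_eq, pow_succ p β,
    show #(quadZeros (N : ZMod (p ^ β))) * (p ^ β * p) ^ 2 =
      p ^ 2 * #(quadZeros (N : ZMod (p ^ β))) * (p ^ β) ^ 2 by ring] at hcount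
  exact Nat.eq_of_mul_eq_mul_right (pow_pos (pow_pos (Fact.out : p.Prime).pos β) 2) hcount

lemma rhoN_prime : rhoN N p = Nat.totient p * rhoZeroN N p + 1 := by
  rw [rhoN_eq_card_quadZeros, ← card_filter_add_card_filter_not (fun z => IsUnit z.2),
    card_quadZeros_filter_isUnit, card_quadZeros_filter_not_isUnit, card_units_eq_totient,
    rhoZeroN_eq_card_sqrtsOfNeg, mul_comm]

lemma rhoN_prime_pow_add_two (hp2N : ¬p ∣ 2 * N) (α : ℕ) :
    rhoN N (p ^ (α + 2)) =
      Nat.totient (p ^ (α + 2)) * rhoZeroN N p + p ^ 2 * rhoN N (p ^ α) := by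
  rw [rhoN_eq_card_quadZeros, ← card_filter_add_card_filter_not (fun z => IsUnit z.2),
    card_quadZeros_filter_isUnit, card_sqrtsOfNeg_prime_pow hp2N (Nat.succ_ne_zero _),
    card_units_eq_totient, card_quadZeros_filter_not_isUnit_pow_add_two,
    ← rhoN_eq_card_quadZeros, mul_comm]

lemma totient_prime_pow_add_two {α : ℕ} (hα : α ≠ 0) :
    Nat.totient (p ^ (α + 2)) = p ^ 2 * Nat.totient (p ^ α) := by
  have hp : p.Prime := Fact.out
  rw [show p ^ (α + 2) = p * (p * p ^ α) by ring,
    Nat.totient_mul_of_prime_of_dvd hp (dvd_mul_right _ _),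
    Nat.totient_mul_of_prime_of_dvd hp (dvd_pow_self p hα)]
  ring

lemma rhoN_prime_pow_even (hp2N : ¬p ∣ 2 * N) (k : ℕ) :
    rhoN N (p ^ (2 * k)) = k * Nat.totient (p ^ (2 * k)) * rhoZeroN N p + p ^ (2 * k) := by
  induction k with
  | zero => simp [rhoN]
  | succ k ih =>
    rw [show 2 * (k + 1) = 2 * k + 2 by ring, rhoN_prime_pow_add_two hp2N, ih]
    rcases eq_or_ne k 0 with rfl | hk
    · ring
    · rw [totient_prime_pow_add_two (by omega : 2 * k ≠ 0)]
      ring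

lemma rhoN_prime_pow_odd (hp2N : ¬p ∣ 2 * N) (k : ℕ) :
    rhoN N (p ^ (2 * k + 1)) =
      (k + 1) * Nat.totient (p ^ (2 * k + 1)) * rhoZeroN N p + p ^ (2 * k) := by
  induction k with
  | zero => simp [rhoN_prime]
  | succ k ih =>
    rw [show 2 * (k + 1) + 1 = 2 * k + 1 + 2 by ring, rhoN_prime_pow_add_two hp2N, ih,
      totient_prime_pow_add_two (Nat.succ_ne_zero _)]
    ring

end PrimePowers

theorem stmt_10_general (N p α : ℕ) (hp : p.Prime) (hp2N : ¬ p ∣ 2 * N) :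
    (Even α → rhoN N (p ^ α) = (α / 2) * Nat.totient (p ^ α) * rhoZeroN N p + p ^ α) ∧
    (Odd α → rhoN N (p ^ α) = ((α + 1) / 2) * Nat.totient (p ^ α) * rhoZeroN N p
        + p ^ (α - 1)) := by
  have : Fact p.Prime := ⟨hp⟩
  refine ⟨fun ⟨k, hk⟩ => ?_, fun ⟨k, hk⟩ => ?_⟩
  · rw [hk, ← two_mul, rhoN_prime_pow_even hp2N, Nat.mul_div_cancel_left k two_pos]
  · rw [hk, rhoN_prime_pow_odd hp2N, show (2 * k + 1 + 1) / 2 = k + 1 by omega,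
      Nat.add_sub_cancel]

/-- For an odd prime `p ∤ 2N` and `α ≥ 1`:
`ρ_N(p^α) = (α/2)·φ(p^α)·ρ_{0,N}(p) + p^α` for even `α`, and
`ρ_N(p^α) = ((α+1)/2)·φ(p^α)·ρ_{0,N}(p) + p^{α−1}` for odd `α`. -/
theorem stmt_10 (N p α : ℕ) (hN : 0 < N) (hp : p.Prime) (hp2N : ¬ p ∣ 2 * N)
    (hα : 1 ≤ α) :
    (Even α → rhoN N (p ^ α) = (α / 2) * Nat.totient (p ^ α) * rhoZeroN N p + p ^ α) ∧
    (Odd α → rhoN N (p ^ α) = ((α + 1) / 2) * Nat.totient (p ^ α) * rhoZeroN N p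
        + p ^ (α - 1)) :=
  stmt_10_general N p α hp hp2N
end

section
/- (Kusmin–Landau) Let f be a differentiable real-valued function on an interval I such that ‖f'(x)‖ ≥ λ > 0 for all x in I and f' is monotone. Then Σ_{n ∈ I ∩ ℤ} e(f(n)) ≪ λ^{-1}, with an absolute implied constant. -/
/-!
By Darboux's theorem `f'` stays in one band `[k + λ, k + 1 - λ]` with `k ∈ ℤ`, so by the mean
value theorem `φ n = f (n + 1) - f n - k` lies in `[λ, 1 - λ]` and is monotone along with `f'`.
Since `e (f (n + 1)) = e (f n) e (φ n)`, each term is `e (f n) = w n (e (f (n + 1)) - e (f n))`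
with `w n = (e (φ n) - 1)⁻¹ = -(1 + i cot (π φ n)) / 2`. Abel summation bounds the sum by
`2 (‖w N‖ + Σ ‖w (n + 1) - w n‖)`; the `w n` all have real part `-1/2` and monotone imaginary
parts, so the variation telescopes, and Jordan's inequality `sin (π t) ≥ 2 λ` on `[λ, 1 - λ]`
gives `‖w n‖ ≤ 1 / (4 λ)`.
-/

open Real Finset
open Complex (I)

theorem norm_sum_range_smul_le {𝕜 E : Type*} [NormedField 𝕜] [SeminormedAddCommGroup E]
    [NormedSpace 𝕜 E] (f : ℕ → 𝕜) (g : ℕ → E) (n : ℕ) {B : ℝ}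
    (hB : ∀ k ≤ n, ‖∑ j ∈ range k, g j‖ ≤ B) :
    ‖∑ i ∈ range n, f i • g i‖ ≤ B * (‖f (n - 1)‖ + ∑ i ∈ range (n - 1), ‖f (i + 1) - f i‖) := by
  have hB0 : 0 ≤ B := (norm_nonneg _).trans (hB 0 n.zero_le)
  rw [sum_range_by_parts, mul_add, mul_sum]
  refine (norm_sub_le _ _).trans (add_le_add ?_ ((norm_sum_le _ _).trans (sum_le_sum ?_)))
  · exact (norm_smul_le _ _).trans (by rw [mul_comm]; gcongr; exact hB n le_rfl)
  · intro i hi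
    have := mem_range.1 hi
    exact (norm_smul_le _ _).trans (by rw [mul_comm]; gcongr; exact hB _ (by omega))

theorem MonotoneOn.sum_range_abs_sub {v : ℕ → ℝ} {n : ℕ} (hv : MonotoneOn v (Set.Iic n)) :
    ∑ i ∈ range n, |v (i + 1) - v i| = v n - v 0 := by
  rw [← sum_range_sub]
  refine sum_congr rfl fun i hi ↦ abs_of_nonneg (sub_nonneg.2 (hv ?_ ?_ (Nat.le_succ i)))
  all_goals simp only [Set.mem_Iic]; have := mem_range.1 hi; omega

theorem sum_range_abs_sub_of_monotoneOn_or_antitoneOn {v : ℕ → ℝ} {n : ℕ}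
    (hv : MonotoneOn v (Set.Iic n) ∨ AntitoneOn v (Set.Iic n)) :
    ∑ i ∈ range n, |v (i + 1) - v i| = |v n - v 0| := by
  rcases hv with hv | hv
  · rw [hv.sum_range_abs_sub, abs_of_nonneg (sub_nonneg.2 (hv (by simp) (by simp) n.zero_le))]
  · have := hv.neg.sum_range_abs_sub
    simp only [neg_sub_neg] at this
    rw [sum_congr rfl fun i _ ↦ abs_sub_comm (v (i + 1)) (v i), this, abs_sub_comm,
      abs_of_nonneg (sub_nonneg.2 (hv (by simp) (by simp) n.zero_le))]

lemma Finset.sum_Icc_add_eq_sum_range {M : Type*} [AddCommMonoid M] (g : ℤ → M) (m : ℤ)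
    (K : ℕ) :
    ∑ n ∈ Icc m (m + K), g n = ∑ i ∈ range (K + 1), g (m + i) := by
  symm
  refine sum_nbij' (fun i : ℕ ↦ m + i) (fun n ↦ (n - m).toNat) ?_ ?_ ?_ ?_ fun _ _ ↦ rfl <;>
    intro x hx <;> simp only [mem_range, mem_Icc] at hx ⊢ <;> omega

lemma Set.OrdConnected.exists_int_subset_Ioo {s : Set ℝ} (hs : s.OrdConnected)
    (hZ : ∀ m : ℤ, (m : ℝ) ∉ s) : ∃ k : ℤ, s ⊆ Set.Ioo (k : ℝ) (k + 1) := by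
  rcases s.eq_empty_or_nonempty with rfl | ⟨y, hy⟩
  · exact ⟨0, Set.empty_subset _⟩
  refine ⟨⌊y⌋, fun x hx ↦ ⟨?_, ?_⟩⟩
  · by_contra! h
    exact hZ ⌊y⌋ (hs.out hx hy ⟨h, Int.floor_le y⟩)
  · by_contra! h
    exact hZ (⌊y⌋ + 1)
      (hs.out hy hx ⟨by push_cast; exact (Int.lt_floor_add_one y).le, by push_cast; exact h⟩)

lemma sub_intCast_mem_Icc_of_le_abs_sub_round {y lam : ℝ} {k : ℤ}
    (hy : y ∈ Set.Ioo (k : ℝ) (k + 1)) (h : lam ≤ |y - round y|) :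
    y - k ∈ Set.Icc lam (1 - lam) := by
  have h0 := h.trans (round_le y k)
  have h1 := h.trans (round_le y (k + 1))
  push_cast at h1
  rw [abs_of_pos (sub_pos.2 hy.1)] at h0
  rw [abs_of_neg (by linarith [hy.2])] at h1
  exact ⟨h0, by linarith⟩

noncomputable def e (x : ℝ) : ℂ := Complex.exp (2 * π * I * x)

lemma e_eq_cos_add_sin_mul_I (t : ℝ) : e t = cos (2 * π * t) + sin (2 * π * t) * I := by
  rw [e, show 2 * π * I * t = ((2 * π * t : ℝ) : ℂ) * I by push_cast; ring,
    Complex.exp_mul_I, ← Complex.ofReal_cos, ← Complex.ofReal_sin]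

lemma norm_e (x : ℝ) : ‖e x‖ = 1 := by
  rw [e, show 2 * π * I * x = ((2 * π * x : ℝ) : ℂ) * I by push_cast; ring]
  exact Complex.norm_exp_ofReal_mul_I _

lemma e_add_intCast (x : ℝ) (k : ℤ) : e (x + k) = e x := by
  rw [e, e,
    show 2 * π * I * ((x + k : ℝ) : ℂ) = 2 * π * I * x + k * (2 * π * I) by push_cast; ring,
    Complex.exp_add, Complex.exp_int_mul_two_pi_mul_I, mul_one]

lemma e_add (x y : ℝ) : e (x + y) = e x * e y := by
  rw [e, e, e, ← Complex.exp_add]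
  push_cast
  ring_nf

lemma norm_e_sub_one (t : ℝ) : ‖e t - 1‖ = 2 * |sin (π * t)| := by
  rw [e, show 2 * π * I * t = I * ((2 * π * t : ℝ) : ℂ) by push_cast; ring,
    Complex.norm_exp_I_mul_ofReal_sub_one, norm_mul, Real.norm_eq_abs, Real.norm_eq_abs,
    show 2 * π * t / 2 = π * t by ring, abs_two]

lemma inv_e_sub_one {t : ℝ} (ht : sin (π * t) ≠ 0) :
    (e t - 1)⁻¹ = -(1 + cot (π * t) * I) / 2 := by
  refine (eq_inv_of_mul_eq_one_left ?_).symm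
  have hpyth := sin_sq_add_cos_sq (π * t)
  rw [e_eq_cos_add_sin_mul_I, show 2 * π * t = 2 * (π * t) by ring, cos_two_mul, sin_two_mul,
    cot_eq_cos_div_sin]
  generalize sin (π * t) = s, cos (π * t) = c at *
  have hs : (s : ℂ) ≠ 0 := by exact_mod_cast ht
  have hpyth' : (s : ℂ) ^ 2 + c ^ 2 = 1 := by exact_mod_cast hpyth
  push_cast
  field_simp
  linear_combination (-2 * (c : ℂ) * I) * hpyth' - 2 * (s : ℂ) * c ^ 2 * Complex.I_sq

lemma norm_inv_e_sub_one_sub_inv {s t : ℝ} (hs : sin (π * s) ≠ 0) (ht : sin (π * t) ≠ 0) :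
    ‖(e s - 1)⁻¹ - (e t - 1)⁻¹‖ = |cot (π * s) - cot (π * t)| / 2 := by
  rw [inv_e_sub_one hs, inv_e_sub_one ht,
    show -(1 + (cot (π * s) : ℂ) * I) / 2 - -(1 + cot (π * t) * I) / 2
      = ((cot (π * t) - cot (π * s)) / 2 : ℝ) * I by push_cast; ring,
    norm_mul, Complex.norm_I, mul_one, Complex.norm_real, Real.norm_eq_abs, abs_div, abs_two,
    abs_sub_comm]

lemma antitoneOn_cot_pi_mul : AntitoneOn (fun t ↦ cot (π * t)) (Set.Ioo 0 1) := by
  intro s hs t ht hst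
  have hsin_s : 0 < sin (π * s) := sin_pos_of_pos_of_lt_pi (by nlinarith [pi_pos, hs.1])
    (by nlinarith [pi_pos, hs.2])
  have hsin_t : 0 < sin (π * t) := sin_pos_of_pos_of_lt_pi (by nlinarith [pi_pos, ht.1])
    (by nlinarith [pi_pos, ht.2])
  have hsin_sub : 0 ≤ sin (π * t - π * s) :=
    sin_nonneg_of_nonneg_of_le_pi (by nlinarith [pi_pos]) (by nlinarith [pi_pos, ht.2, hs.1])
  rw [sin_sub] at hsin_sub
  simp only [cot_eq_cos_div_sin]
  rw [div_le_div_iff₀ hsin_t hsin_s]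
  linarith

lemma two_mul_le_sin_pi_mul {lam t : ℝ} (hlam : 0 < lam) (ht : t ∈ Set.Icc lam (1 - lam)) :
    2 * lam ≤ sin (π * t) := by
  wlog ht' : t ≤ 1 / 2 generalizing t
  · rw [← sin_pi_sub, show π - π * t = π * (1 - t) by ring]
    exact this ⟨by linarith [ht.2], by linarith [ht.1]⟩ (by linarith)
  calc 2 * lam ≤ 2 / π * (π * t) := by field_simp; linarith [ht.1]
    _ ≤ sin (π * t) := mul_le_sin (by nlinarith [pi_pos, ht.1]) (by nlinarith [pi_pos])

lemma norm_inv_e_sub_one_le {lam t : ℝ} (hlam : 0 < lam) (ht : t ∈ Set.Icc lam (1 - lam)) :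
    ‖(e t - 1)⁻¹‖ ≤ 1 / (4 * lam) := by
  have hsin := two_mul_le_sin_pi_mul hlam ht
  rw [norm_inv, norm_e_sub_one, abs_of_pos (by linarith), one_div]
  exact inv_anti₀ (by positivity) (by linarith)

lemma abs_cot_pi_mul_le {lam t : ℝ} (hlam : 0 < lam) (ht : t ∈ Set.Icc lam (1 - lam)) :
    |cot (π * t)| ≤ 1 / (2 * lam) := by
  have hsin := two_mul_le_sin_pi_mul hlam ht
  rw [cot_eq_cos_div_sin, abs_div, abs_of_pos (a := sin (π * t)) (by linarith)]
  exact div_le_div₀ zero_le_one (abs_cos_le_one _) (by positivity) hsin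

lemma sum_range_norm_inv_e_sub_one_sub_le {φ : ℕ → ℝ} {n : ℕ} {lam : ℝ} (hlam : 0 < lam)
    (hband : ∀ i ≤ n, φ i ∈ Set.Icc lam (1 - lam))
    (hmono : MonotoneOn φ (Set.Iic n) ∨ AntitoneOn φ (Set.Iic n)) :
    ∑ i ∈ range n, ‖(e (φ (i + 1)) - 1)⁻¹ - (e (φ i) - 1)⁻¹‖ ≤ 1 / (2 * lam) := by
  have hsin : ∀ i ≤ n, sin (π * φ i) ≠ 0 := fun i hi ↦
    (lt_of_lt_of_le (by positivity) (two_mul_le_sin_pi_mul hlam (hband i hi))).ne'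
  have hmaps : Set.MapsTo φ (Set.Iic n) (Set.Ioo 0 1) := fun i hi ↦
    ⟨by linarith [(hband i hi).1], by linarith [(hband i hi).2]⟩
  have hcot : MonotoneOn (fun i ↦ cot (π * φ i)) (Set.Iic n) ∨
      AntitoneOn (fun i ↦ cot (π * φ i)) (Set.Iic n) :=
    hmono.symm.imp (antitoneOn_cot_pi_mul.comp · hmaps)
      (antitoneOn_cot_pi_mul.comp_MonotoneOn · hmaps)
  calc ∑ i ∈ range n, ‖(e (φ (i + 1)) - 1)⁻¹ - (e (φ i) - 1)⁻¹‖
      = ∑ i ∈ range n, |cot (π * φ (i + 1)) - cot (π * φ i)| / 2 := by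
        refine sum_congr rfl fun i hi ↦ norm_inv_e_sub_one_sub_inv (hsin _ ?_) (hsin _ ?_) <;>
          linarith [mem_range.1 hi]
    _ = |cot (π * φ n) - cot (π * φ 0)| / 2 := by
        rw [← sum_div, sum_range_abs_sub_of_monotoneOn_or_antitoneOn hcot]
    _ ≤ (1 / (2 * lam) + 1 / (2 * lam)) / 2 := by
        gcongr
        exact (abs_sub _ _).trans (add_le_add (abs_cot_pi_mul_le hlam (hband n le_rfl))
          (abs_cot_pi_mul_le hlam (hband 0 n.zero_le)))
    _ = 1 / (2 * lam) := by ring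

theorem norm_sum_range_e_le {u : ℕ → ℝ} {K : ℕ} {k : ℤ} {lam : ℝ} (hlam : 0 < lam)
    (hband : ∀ i < K, u (i + 1) - u i - k ∈ Set.Icc lam (1 - lam))
    (hmono : MonotoneOn (fun i ↦ u (i + 1) - u i) (Set.Iio K) ∨
      AntitoneOn (fun i ↦ u (i + 1) - u i) (Set.Iio K)) :
    ‖∑ i ∈ range K, e (u i)‖ ≤ 3 / (2 * lam) := by
  obtain _ | n := K
  · simp only [range_zero, sum_empty, norm_zero]
    positivity
  set φ : ℕ → ℝ := fun i ↦ u (i + 1) - u i - k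
  have hIic : Set.Iic n = Set.Iio (n + 1) := by ext; simp
  have hφband : ∀ i ≤ n, φ i ∈ Set.Icc lam (1 - lam) := fun i hi ↦ hband i (by omega)
  have hφmono : MonotoneOn φ (Set.Iic n) ∨ AntitoneOn φ (Set.Iic n) := by
    rw [hIic]
    exact hmono.imp (fun h _ hi _ hj hij ↦ sub_le_sub_right (h hi hj hij) _)
      (fun h _ hi _ hj hij ↦ sub_le_sub_right (h hi hj hij) _)
  have hstep : ∀ i ≤ n, e (u i) = (e (φ i) - 1)⁻¹ • (e (u (i + 1)) - e (u i)) := by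
    intro i hi
    have hne : e (φ i) - 1 ≠ 0 := by
      have hsin : 0 < sin (π * φ i) := by linarith [two_mul_le_sin_pi_mul hlam (hφband i hi)]
      rw [← norm_ne_zero_iff, norm_e_sub_one]
      exact (mul_pos two_pos (abs_pos.2 hsin.ne')).ne'
    have hshift : e (u (i + 1)) = e (u i) * e (φ i) := by
      rw [← e_add, ← e_add_intCast (u i + φ i) k]
      congr 1
      ring
    rw [hshift, smul_eq_mul]
    field_simp
  have hpartial : ∀ m ≤ n + 1, ‖∑ j ∈ range m, (e (u (j + 1)) - e (u j))‖ ≤ 2 := by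
    intro m _
    rw [sum_range_sub (fun j ↦ e (u j))]
    exact (norm_sub_le _ _).trans (by rw [norm_e, norm_e]; norm_num)
  have habel := norm_sum_range_smul_le (fun i ↦ (e (φ i) - 1)⁻¹) _ (n + 1) hpartial
  rw [Nat.add_sub_cancel] at habel
  rw [sum_congr rfl fun i hi ↦ hstep i (Nat.lt_succ_iff.1 (mem_range.1 hi))]
  calc _ ≤ _ := habel
    _ ≤ 2 * (1 / (4 * lam) + 1 / (2 * lam)) := by
        gcongr
        · exact norm_inv_e_sub_one_le hlam (hφband n le_rfl)
        · exact sum_range_norm_inv_e_sub_one_sub_le hlam hφband hφmono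
    _ = 3 / (2 * lam) := by field_simp; ring

theorem exists_int_forall_deriv_sub_mem_Icc {f : ℝ → ℝ} {s : Set ℝ} {lam : ℝ}
    (hs : s.OrdConnected) (hf : ∀ x ∈ s, DifferentiableAt ℝ f x) (hlam : 0 < lam)
    (hdist : ∀ x ∈ s, lam ≤ |deriv f x - round (deriv f x)|) :
    ∃ k : ℤ, ∀ x ∈ s, deriv f x - k ∈ Set.Icc lam (1 - lam) := by
  obtain ⟨k, hk⟩ := (hs.image_deriv hf).exists_int_subset_Ioo fun m ⟨x, hx, hxm⟩ ↦ by
    have := hdist x hx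
    rw [hxm, round_intCast, sub_self, abs_zero] at this
    linarith
  exact ⟨k, fun x hx ↦ sub_intCast_mem_Icc_of_le_abs_sub_round (hk ⟨x, hx, rfl⟩) (hdist x hx)⟩

lemma exists_deriv_eq_sub_of_lt {f : ℝ → ℝ} {x₀ : ℝ} {K i : ℕ}
    (hf : ∀ x ∈ Set.Icc x₀ (x₀ + K), DifferentiableAt ℝ f x) (hi : i < K) :
    ∃ c ∈ Set.Icc x₀ (x₀ + K), x₀ + i < c ∧ c < x₀ + i + 1 ∧
      deriv f c = f (x₀ + (i + 1 : ℕ)) - f (x₀ + i) := by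
  have hiK : (i : ℝ) + 1 ≤ K := by exact_mod_cast hi
  have hsub : Set.Icc (x₀ + i) (x₀ + i + 1) ⊆ Set.Icc x₀ (x₀ + K) :=
    Set.Icc_subset_Icc (by linarith [(Nat.cast_nonneg i : (0 : ℝ) ≤ i)]) (by linarith)
  obtain ⟨c, hc, hderiv⟩ := exists_deriv_eq_slope f (lt_add_one (x₀ + i))
    (fun y hy ↦ (hf y (hsub hy)).continuousAt.continuousWithinAt)
    (fun y hy ↦ (hf y (hsub (Set.Ioo_subset_Icc_self hy))).differentiableWithinAt)
  refine ⟨c, hsub (Set.Ioo_subset_Icc_self hc), hc.1, hc.2, ?_⟩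
  rw [hderiv, add_sub_cancel_left, div_one, Nat.cast_succ, add_assoc]

lemma monotoneOn_sub_of_monotoneOn_deriv {f : ℝ → ℝ} {x₀ : ℝ} {K : ℕ}
    (hf : ∀ x ∈ Set.Icc x₀ (x₀ + K), DifferentiableAt ℝ f x)
    (hmono : MonotoneOn (deriv f) (Set.Icc x₀ (x₀ + K))) :
    MonotoneOn (fun i : ℕ ↦ f (x₀ + (i + 1 : ℕ)) - f (x₀ + i)) (Set.Iio K) := by
  intro i hi j hj hij
  rcases hij.eq_or_lt with rfl | hlt
  · rfl
  obtain ⟨c, hc, -, hci, hfc⟩ := exists_deriv_eq_sub_of_lt hf hi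
  obtain ⟨d, hd, hdj, -, hfd⟩ := exists_deriv_eq_sub_of_lt hf hj
  have hij' : (i : ℝ) + 1 ≤ j := by exact_mod_cast hlt
  simp only [← hfc, ← hfd]
  exact hmono hc hd (by linarith)

lemma antitoneOn_sub_of_antitoneOn_deriv {f : ℝ → ℝ} {x₀ : ℝ} {K : ℕ}
    (hf : ∀ x ∈ Set.Icc x₀ (x₀ + K), DifferentiableAt ℝ f x)
    (hanti : AntitoneOn (deriv f) (Set.Icc x₀ (x₀ + K))) :
    AntitoneOn (fun i : ℕ ↦ f (x₀ + (i + 1 : ℕ)) - f (x₀ + i)) (Set.Iio K) := by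
  have := monotoneOn_sub_of_monotoneOn_deriv (f := -f) (fun x hx ↦ (hf x hx).neg)
    (by rw [deriv.neg']; exact hanti.neg)
  simpa only [Pi.neg_apply, neg_sub_neg, neg_sub] using this.neg

theorem norm_sum_range_e_comp_le {f : ℝ → ℝ} {x₀ lam : ℝ} {K : ℕ} (hlam : 0 < lam)
    (hf : ∀ x ∈ Set.Icc x₀ (x₀ + K), DifferentiableAt ℝ f x)
    (hmono : MonotoneOn (deriv f) (Set.Icc x₀ (x₀ + K)) ∨
      AntitoneOn (deriv f) (Set.Icc x₀ (x₀ + K)))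
    (hdist : ∀ x ∈ Set.Icc x₀ (x₀ + K), lam ≤ |deriv f x - round (deriv f x)|) :
    ‖∑ i ∈ range (K + 1), e (f (x₀ + i))‖ ≤ 2 / lam := by
  have hlam_le : lam ≤ 1 / 2 :=
    (hdist x₀ ⟨le_rfl, by simp⟩).trans (abs_sub_round _)
  obtain ⟨k, hk⟩ := exists_int_forall_deriv_sub_mem_Icc Set.ordConnected_Icc hf hlam hdist
  have hband : ∀ i < K, f (x₀ + (i + 1 : ℕ)) - f (x₀ + i) - k ∈ Set.Icc lam (1 - lam) := by
    intro i hi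
    obtain ⟨c, hc, -, -, hfc⟩ := exists_deriv_eq_sub_of_lt hf hi
    exact hfc ▸ hk c hc
  have hsum : ‖∑ i ∈ range K, e (f (x₀ + i))‖ ≤ 3 / (2 * lam) :=
    norm_sum_range_e_le (u := fun i : ℕ ↦ f (x₀ + i)) hlam hband
      (hmono.imp (monotoneOn_sub_of_monotoneOn_deriv hf) (antitoneOn_sub_of_antitoneOn_deriv hf))
  calc ‖∑ i ∈ range (K + 1), e (f (x₀ + i))‖
      ≤ ‖∑ i ∈ range K, e (f (x₀ + i))‖ + ‖e (f (x₀ + K))‖ := by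
        rw [sum_range_succ]; exact norm_add_le _ _
    _ ≤ 3 / (2 * lam) + 1 / (2 * lam) := by
        rw [norm_e]
        gcongr
        rw [le_div_iff₀ (by positivity)]
        linarith
    _ = 2 / lam := by field_simp; ring

open Complex in
/-- (Kusmin–Landau) There is an absolute constant `C` such that: if `f` is
differentiable on `[a, b]` with monotone derivative and `‖f'(x)‖ ≥ λ > 0` on `[a, b]`
(`‖t‖` the distance of `t` to the nearest integer), then
`|Σ_{a ≤ n ≤ b} e(f(n))| ≤ C / λ`. -/
theorem stmt_13 :
    ∃ C : ℝ, 0 < C ∧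
      ∀ (f : ℝ → ℝ) (a b lam : ℝ), a ≤ b → 0 < lam →
        (∀ x ∈ Set.Icc a b, DifferentiableAt ℝ f x) →
        (MonotoneOn (deriv f) (Set.Icc a b) ∨ AntitoneOn (deriv f) (Set.Icc a b)) →
        (∀ x ∈ Set.Icc a b, lam ≤ |deriv f x - round (deriv f x)|) →
        ‖(∑ n ∈ Finset.Icc ⌈a⌉ ⌊b⌋,
            Complex.exp (2 * Real.pi * I * (f n)))‖ ≤ C / lam := by
  refine ⟨2, two_pos, fun f a b lam _ hlam hf hmono hdist ↦ ?_⟩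
  rcases lt_or_ge ⌊b⌋ ⌈a⌉ with hempty | hle
  · rw [Finset.Icc_eq_empty_of_lt hempty, sum_empty, norm_zero]
    positivity
  obtain ⟨K, hK⟩ : ∃ K : ℕ, ⌊b⌋ = ⌈a⌉ + K := ⟨(⌊b⌋ - ⌈a⌉).toNat, by omega⟩
  have hsub : Set.Icc (⌈a⌉ : ℝ) (⌈a⌉ + K) ⊆ Set.Icc a b :=
    Set.Icc_subset_Icc (Int.le_ceil a) (by exact_mod_cast hK ▸ Int.floor_le b)
  rw [hK, sum_Icc_add_eq_sum_range]
  push_cast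
  exact norm_sum_range_e_comp_le hlam (fun x hx ↦ hf x (hsub hx))
    (hmono.imp (·.mono hsub) (·.mono hsub)) (fun x hx ↦ hdist x (hsub hx))
end
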